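/- Let β > 0 and x, y ∈ ℝ². Then ∫_{ℝ²} ∫_{ℝ²} exp(−β(‖x−Z‖² + ‖Z−W‖² + ‖W−y‖² + ‖x−W‖² + ‖Z−y‖²)) dW dZ = (π²/(8β²)) · exp(−β‖x−y‖²). (This is the integral whose value, multiplied by ρ², gives the expected number E[Σ₂₍₂₎] of ordered pairs of three-hop paths from x to y that share both intermediate vertices and exactly the middle edge, in the random connection model with connection function H(r) = exp(−βr²).) -/
import Mathlib


open MeasureTheory Real

section aux

variable {V : Type*} [NormedAddCommGroup V] [InnerProductSpace ℝ V]

lemma inner_exp_id (x y Z W : V) :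
    ‖x - Z‖ ^ 2 + ‖Z - (W + (3:ℝ)⁻¹ • (Z + x + y))‖ ^ 2 +
      ‖(W + (3:ℝ)⁻¹ • (Z + x + y)) - y‖ ^ 2 + ‖x - (W + (3:ℝ)⁻¹ • (Z + x + y))‖ ^ 2 +
      ‖Z - y‖ ^ 2 =
    3 * ‖W‖ ^ 2 + ((4/3) * (‖Z - x‖ ^ 2 + ‖Z - y‖ ^ 2) + (1/3) * ‖x - y‖ ^ 2) := by
  simp only [← real_inner_self_eq_norm_sq, inner_sub_left, inner_sub_right,
    inner_add_left, inner_add_right, real_inner_smul_left, real_inner_smul_right,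
    real_inner_comm Z x, real_inner_comm y Z, real_inner_comm y x,
    real_inner_comm x W, real_inner_comm y W, real_inner_comm Z W]
  ring

lemma outer_exp_id (x y W : V) :
    (4/3) * (‖(W + (2:ℝ)⁻¹ • (x + y)) - x‖ ^ 2 + ‖(W + (2:ℝ)⁻¹ • (x + y)) - y‖ ^ 2) +
      (1/3) * ‖x - y‖ ^ 2 =
    (8/3) * ‖W‖ ^ 2 + ‖x - y‖ ^ 2 := by
  simp only [← real_inner_self_eq_norm_sq, inner_sub_left, inner_sub_right,
    inner_add_left, inner_add_right, real_inner_smul_left, real_inner_smul_right,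
    real_inner_comm y x, real_inner_comm x W, real_inner_comm y W]
  ring

end aux

lemma gauss2 {b : ℝ} (hb : 0 < b) :
    (∫ v : EuclideanSpace ℝ (Fin 2), Real.exp (-b * ‖v‖ ^ 2)) = π / b := by
  rw [GaussianFourier.integral_rexp_neg_mul_sq_norm hb]
  rw [show ((Module.finrank ℝ (EuclideanSpace ℝ (Fin 2)) : ℝ) / 2) = 1 by
    simp [finrank_euclideanSpace]]
  exact Real.rpow_one _

/-- **The Σ₂₍₂₎ integral (pairs of three-hop paths sharing both vertices and the middle edge).**
For β > 0 and x, y ∈ ℝ²,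
∫∫_{ℝ²×ℝ²} exp(−β(‖x−Z‖² + ‖Z−W‖² + ‖W−y‖² + ‖x−W‖² + ‖Z−y‖²)) dW dZ
  = (π²/(8β²))·exp(−β‖x−y‖²). -/
theorem sigma_two_two_integral (β : ℝ) (hβ : 0 < β) (x y : EuclideanSpace ℝ (Fin 2)) :
    (∫ Z : EuclideanSpace ℝ (Fin 2), ∫ W : EuclideanSpace ℝ (Fin 2),
        Real.exp (-β * (‖x - Z‖ ^ 2 + ‖Z - W‖ ^ 2 + ‖W - y‖ ^ 2 +
          ‖x - W‖ ^ 2 + ‖Z - y‖ ^ 2))) =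
      (Real.pi ^ 2 / (8 * β ^ 2)) * Real.exp (-β * ‖x - y‖ ^ 2) := by
  have h3β : (0:ℝ) < 3 * β := by linarith
  have h83β : (0:ℝ) < (8/3) * β := by linarith
  have inner_eval : ∀ Z : EuclideanSpace ℝ (Fin 2),
      (∫ W : EuclideanSpace ℝ (Fin 2),
        Real.exp (-β * (‖x - Z‖ ^ 2 + ‖Z - W‖ ^ 2 + ‖W - y‖ ^ 2 +
          ‖x - W‖ ^ 2 + ‖Z - y‖ ^ 2))) =
      (π / (3 * β)) * Real.exp (-β *
        ((4/3) * (‖Z - x‖ ^ 2 + ‖Z - y‖ ^ 2) + (1/3) * ‖x - y‖ ^ 2)) := by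
    intro Z
    rw [← integral_add_right_eq_self (fun W : EuclideanSpace ℝ (Fin 2) =>
      Real.exp (-β * (‖x - Z‖ ^ 2 + ‖Z - W‖ ^ 2 + ‖W - y‖ ^ 2 +
        ‖x - W‖ ^ 2 + ‖Z - y‖ ^ 2))) ((3:ℝ)⁻¹ • (Z + x + y))]
    simp only [inner_exp_id x y Z]
    have hsplit : ∀ W : EuclideanSpace ℝ (Fin 2),
        -β * (3 * ‖W‖ ^ 2 + ((4/3) * (‖Z - x‖ ^ 2 + ‖Z - y‖ ^ 2) + (1/3) * ‖x - y‖ ^ 2)) =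
        -(3 * β) * ‖W‖ ^ 2 +
          (-β * ((4/3) * (‖Z - x‖ ^ 2 + ‖Z - y‖ ^ 2) + (1/3) * ‖x - y‖ ^ 2)) :=
      fun W => by ring
    simp_rw [hsplit, Real.exp_add]
    rw [integral_mul_const, gauss2 h3β]
  simp_rw [inner_eval]
  rw [integral_const_mul]
  rw [← integral_add_right_eq_self (fun Z : EuclideanSpace ℝ (Fin 2) =>
    Real.exp (-β * ((4/3) * (‖Z - x‖ ^ 2 + ‖Z - y‖ ^ 2) + (1/3) * ‖x - y‖ ^ 2)))
    ((2:ℝ)⁻¹ • (x + y))]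
  simp only [outer_exp_id x y]
  have hsplit2 : ∀ W : EuclideanSpace ℝ (Fin 2),
      -β * ((8/3) * ‖W‖ ^ 2 + ‖x - y‖ ^ 2) =
      -((8/3) * β) * ‖W‖ ^ 2 + (-β * ‖x - y‖ ^ 2) := fun W => by ring
  simp_rw [hsplit2, Real.exp_add]
  rw [integral_mul_const, gauss2 h83β]
  field_simp
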